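/- There exists an absolute constant C > 0 such that for every n ≥ 1, every β ≥ C·n^{3/2}, every λ ≥ 1 and every s ≥ 1: ν_β(Q_{2s} ∖ Q_{2s−1}) < (1/2)·ν_β(Q_{2s} ∖ Q_{2s−2}); that is, ν_β(A_s ∩ B_s) < (1/2)·ν_β(A_s). -/

import Mathlib

open MeasureTheory ENNReal

/-- The measure `dν_β(x) = min{1, |x|^{-β}} dx` on `ℝⁿ`. -/
noncomputable def nuMeas (n : ℕ) (β : ℝ) : Measure (EuclideanSpace ℝ (Fin n)) :=
  volume.withDensity fun x => ENNReal.ofReal (min 1 (‖x‖ ^ (-β)))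

/-- The cube `Q_s = [-2^s λ, 2^s λ]ⁿ`. -/
def cubeQ (n : ℕ) (lam : ℝ) (s : ℕ) : Set (EuclideanSpace ℝ (Fin n)) :=
  {x | ∀ i, |x i| ≤ 2 ^ s * lam}

/-! Where `‖x‖ ≥ 1` the density of `ν_β` is `‖x‖^{-β}`, homogeneous of degree `-β`, and the shell
`Q_{2s} ∖ Q_{2s-1}` is the dilate by `2` of the shell `Q_{2s-1} ∖ Q_{2s-2}`. Hence the outer shell
has `2^{n-β}` times the (positive, finite) measure of the inner one, which is less once `β > n`;
since `Q_{2s} ∖ Q_{2s-2}` is the disjoint union of the two shells, the outer one carries less than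
half of it. -/

open Set Pointwise Module

theorem MeasureTheory.Measure.setLIntegral_smul_set {E : Type*} [NormedAddCommGroup E]
    [NormedSpace ℝ E] [MeasurableSpace E] [BorelSpace E] [FiniteDimensional ℝ E]
    (μ : Measure E) [μ.IsAddHaarMeasure] {c : ℝ} (hc : c ≠ 0) (f : E → ℝ≥0∞) (S : Set E) :
    ∫⁻ x in c • S, f x ∂μ = ENNReal.ofReal (|c| ^ finrank ℝ E) * ∫⁻ x in S, f (c • x) ∂μ := by
  have hmap : MeasurePreserving (c • · : E → E) μ
      (ENNReal.ofReal |(c ^ finrank ℝ E)⁻¹| • μ) :=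
    ⟨measurable_const_smul c, Measure.map_addHaar_smul μ hc⟩
  rw [hmap.setLIntegral_comp_emb (measurableEmbedding_const_smul₀ hc) f S, image_smul,
    Measure.restrict_smul, lintegral_smul_measure, smul_eq_mul, ← mul_assoc,
    ← ENNReal.ofReal_mul (by positivity), abs_inv, abs_pow,
    mul_inv_cancel₀ (by positivity), ENNReal.ofReal_one, one_mul]

section NuMeas

variable {n : ℕ} {β : ℝ}

theorem nuMeas_apply_of_one_le_norm (hβ : 0 ≤ β) {S : Set (EuclideanSpace ℝ (Fin n))}
    (hS : MeasurableSet S) (hS1 : ∀ x ∈ S, 1 ≤ ‖x‖) :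
    nuMeas n β S = ∫⁻ x in S, ENNReal.ofReal (‖x‖ ^ (-β)) := by
  rw [nuMeas, withDensity_apply _ hS]
  refine setLIntegral_congr_fun hS fun x hx => ?_
  rw [min_eq_right (Real.rpow_le_one_of_one_le_of_nonpos (hS1 x hx) (neg_nonpos.2 hβ))]

theorem nuMeas_smul_set (hβ : 0 ≤ β) {c : ℝ} (hc : 1 ≤ c) {S : Set (EuclideanSpace ℝ (Fin n))}
    (hS : MeasurableSet S) (hS1 : ∀ x ∈ S, 1 ≤ ‖x‖) :
    nuMeas n β (c • S) = ENNReal.ofReal (c ^ ((n : ℝ) - β)) * nuMeas n β S := by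
  have hc0 : 0 < c := one_pos.trans_le hc
  have hcS1 : ∀ x ∈ c • S, 1 ≤ ‖x‖ := by
    rintro _ ⟨x, hx, rfl⟩
    rw [norm_smul, Real.norm_of_nonneg hc0.le]
    exact one_le_mul_of_one_le_of_one_le hc (hS1 x hx)
  have hnorm : ∀ x : EuclideanSpace ℝ (Fin n),
      ENNReal.ofReal (‖c • x‖ ^ (-β))
        = ENNReal.ofReal (c ^ (-β)) * ENNReal.ofReal (‖x‖ ^ (-β)) := by
    intro x
    rw [norm_smul, Real.norm_of_nonneg hc0.le, Real.mul_rpow hc0.le (norm_nonneg x),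
      ENNReal.ofReal_mul (by positivity)]
  rw [nuMeas_apply_of_one_le_norm hβ (hS.const_smul₀ c) hcS1,
    nuMeas_apply_of_one_le_norm hβ hS hS1, Measure.setLIntegral_smul_set _ hc0.ne',
    finrank_euclideanSpace_fin]
  simp only [hnorm]
  rw [lintegral_const_mul' _ _ ofReal_ne_top, ← mul_assoc, ← ENNReal.ofReal_mul (by positivity),
    abs_of_pos hc0, ← Real.rpow_natCast, ← Real.rpow_add hc0, sub_eq_add_neg]

theorem nuMeas_le_volume (S : Set (EuclideanSpace ℝ (Fin n))) : nuMeas n β S ≤ volume S := by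
  have hle : nuMeas n β ≤ volume.withDensity 1 :=
    withDensity_mono (.of_forall fun x => ENNReal.ofReal_le_one.2 (min_le_left _ _))
  rw [withDensity_one] at hle
  exact hle S

theorem nuMeas_eq_zero_iff {S : Set (EuclideanSpace ℝ (Fin n))} (h0 : 0 ∉ S) :
    nuMeas n β S = 0 ↔ volume S = 0 := by
  rw [nuMeas, withDensity_apply_eq_zero' (by fun_prop), inter_eq_right.2]
  intro x hx
  have hx0 : x ≠ 0 := ne_of_mem_of_not_mem hx h0
  simp only [mem_ofPred_eq, ne_eq, ENNReal.ofReal_eq_zero, not_le]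
  exact lt_min one_pos (Real.rpow_pos_of_pos (norm_pos_iff.2 hx0) _)

end NuMeas

def cubeShell (n : ℕ) (lam : ℝ) (s : ℕ) : Set (EuclideanSpace ℝ (Fin n)) :=
  cubeQ n lam (s + 1) \ cubeQ n lam s

section Cubes

variable {n : ℕ} {lam : ℝ}

theorem isClosed_cubeQ (s : ℕ) : IsClosed (cubeQ n lam s) := by
  simp only [cubeQ, ofPred_forall]
  exact isClosed_iInter fun i => isClosed_le (by fun_prop) continuous_const

theorem cubeQ_eq_preimage_closedBall (hlam : 0 ≤ lam) (s : ℕ) :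
    cubeQ n lam s = EuclideanSpace.equiv (Fin n) ℝ ⁻¹' Metric.closedBall 0 (2 ^ s * lam) := by
  ext x
  simp [cubeQ, pi_norm_le_iff_of_nonneg (by positivity : (0 : ℝ) ≤ 2 ^ s * lam)]

theorem isCompact_cubeQ (hlam : 0 ≤ lam) (s : ℕ) : IsCompact (cubeQ n lam s) := by
  rw [cubeQ_eq_preimage_closedBall hlam]
  exact (EuclideanSpace.equiv (Fin n) ℝ).toHomeomorph.isCompact_preimage.2
    (isCompact_closedBall 0 _)

theorem cubeQ_mono (hlam : 0 ≤ lam) {s t : ℕ} (h : s ≤ t) : cubeQ n lam s ⊆ cubeQ n lam t :=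
  fun _ hx i => (hx i).trans (mul_le_mul_of_nonneg_right (pow_le_pow_right₀ one_le_two h) hlam)

theorem two_smul_cubeQ (s : ℕ) : (2 : ℝ) • cubeQ n lam s = cubeQ n lam (s + 1) := by
  ext x
  rw [mem_smul_set_iff_inv_smul_mem₀ two_ne_zero]
  simp only [cubeQ, mem_ofPred_eq, PiLp.smul_apply, smul_eq_mul, abs_mul, abs_inv, abs_two,
    pow_succ]
  refine forall_congr' fun i => ?_
  rw [inv_mul_le_iff₀ two_pos, mul_comm 2, mul_right_comm]

theorem lt_norm_of_notMem_cubeQ {s : ℕ} {x : EuclideanSpace ℝ (Fin n)}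
    (hx : x ∉ cubeQ n lam s) : 2 ^ s * lam < ‖x‖ := by
  simp only [cubeQ, mem_ofPred_eq, not_forall, not_le] at hx
  obtain ⟨i, hi⟩ := hx
  exact hi.trans_le (PiLp.norm_apply_le x i)

theorem two_smul_cubeShell (s : ℕ) : (2 : ℝ) • cubeShell n lam s = cubeShell n lam (s + 1) := by
  rw [cubeShell, smul_set_sdiff₀ two_ne_zero, two_smul_cubeQ, two_smul_cubeQ, cubeShell]

theorem measurableSet_cubeShell (s : ℕ) : MeasurableSet (cubeShell n lam s) :=
  (isClosed_cubeQ _).measurableSet.diff (isClosed_cubeQ _).measurableSet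

theorem one_le_norm_of_mem_cubeShell (hlam : 1 ≤ lam) {s : ℕ} {x : EuclideanSpace ℝ (Fin n)}
    (hx : x ∈ cubeShell n lam s) : 1 ≤ ‖x‖ :=
  (one_le_mul_of_one_le_of_one_le (one_le_pow₀ one_le_two) hlam).trans
    (lt_norm_of_notMem_cubeQ hx.2).le

theorem cubeShell_union (hlam : 0 ≤ lam) (s : ℕ) :
    cubeShell n lam (s + 1) ∪ cubeShell n lam s = cubeQ n lam (s + 2) \ cubeQ n lam s :=
  sdiff_union_sdiff_cancel (cubeQ_mono hlam (by omega)) (cubeQ_mono hlam (by omega))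

theorem disjoint_cubeShell_succ (s : ℕ) :
    Disjoint (cubeShell n lam (s + 1)) (cubeShell n lam s) :=
  disjoint_sdiff_left.mono_right sdiff_subset

theorem ball_subset_cubeShell (hn : 0 < n) (hlam : 0 < lam) (s : ℕ) :
    Metric.ball (WithLp.toLp 2 fun _ => 3 / 2 * (2 ^ s * lam)) (2 ^ s * lam / 2)
      ⊆ cubeShell n lam s := by
  have ha : (0 : ℝ) < 2 ^ s * lam := mul_pos (pow_pos two_pos s) hlam
  intro x hx
  have hcoord : ∀ i, 2 ^ s * lam < x i ∧ x i < 2 * (2 ^ s * lam) := by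
    intro i
    have := (PiLp.norm_apply_le (x - WithLp.toLp 2 fun _ => 3 / 2 * (2 ^ s * lam)) i).trans_lt
      (mem_ball_iff_norm.1 hx)
    simp only [PiLp.sub_apply, Real.norm_eq_abs, abs_lt] at this
    constructor <;> linarith
  refine ⟨fun i => ?_, fun hmem => ?_⟩
  · rw [pow_succ, abs_le]
    constructor <;> linarith [hcoord i]
  · have := hcoord ⟨0, hn⟩
    linarith [hmem ⟨0, hn⟩, le_abs_self (x ⟨0, hn⟩)]

theorem volume_cubeShell_ne_zero (hn : 0 < n) (hlam : 0 < lam) (s : ℕ) :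
    volume (cubeShell n lam s) ≠ 0 :=
  ((Metric.measure_ball_pos volume _ (by positivity)).trans_le
    (measure_mono (ball_subset_cubeShell hn hlam s))).ne'

theorem volume_cubeShell_ne_top (hlam : 0 ≤ lam) (s : ℕ) : volume (cubeShell n lam s) ≠ ⊤ :=
  (measure_mono sdiff_subset).trans_lt (isCompact_cubeQ hlam _).measure_lt_top |>.ne

end Cubes

theorem ENNReal.lt_half_mul_add_of_le_mul {a b c : ℝ≥0∞} (hab : a ≤ c * b) (hc : c < 1)
    (hb0 : b ≠ 0) (hb : b ≠ ⊤) : a < 1 / 2 * (a + b) := by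
  have hlt : a < b := hab.trans_lt (by simpa using (ENNReal.mul_lt_mul_iff_left hb0 hb).2 hc)
  calc a = 1 / 2 * (a + a) := by
        rw [← two_mul, ← mul_assoc, one_div, ENNReal.inv_mul_cancel two_ne_zero ofNat_ne_top,
          one_mul]
    _ < 1 / 2 * (a + b) := by
        gcongr
        exacts [by norm_num, by norm_num, hlt.ne_top]

/-- There is an absolute constant `C > 0` such that for all `n ≥ 1`,
`β ≥ C n^{3/2}`, `λ ≥ 1` and `s ≥ 1`:
`ν_β(Q_{2s} ∖ Q_{2s-1}) < (1/2) ν_β(Q_{2s} ∖ Q_{2s-2})`, i.e. `ν_β(A_s ∩ B_s) < ν_β(A_s)/2`. -/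
theorem statement14 :
    ∃ C : ℝ, 0 < C ∧ ∀ n : ℕ, 1 ≤ n → ∀ β : ℝ, C * (n : ℝ) ^ ((3 : ℝ) / 2) ≤ β →
      ∀ lam : ℝ, 1 ≤ lam → ∀ s : ℕ, 1 ≤ s →
        nuMeas n β (cubeQ n lam (2 * s) \ cubeQ n lam (2 * s - 1))
          < (1 / 2) * nuMeas n β (cubeQ n lam (2 * s) \ cubeQ n lam (2 * s - 2)) := by
  refine ⟨2, two_pos, fun n hn β hβ lam hlam s hs => ?_⟩
  obtain ⟨t, rfl⟩ := Nat.exists_eq_add_of_le' hs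
  have hnβ : (n : ℝ) < β := by
    have : (n : ℝ) ≤ (n : ℝ) ^ ((3 : ℝ) / 2) :=
      Real.self_le_rpow_of_one_le (Nat.one_le_cast.2 hn) (by norm_num)
    linarith [(Nat.one_le_cast (α := ℝ)).2 hn]
  have hlam0 : 0 ≤ lam := zero_le_one.trans hlam
  rw [show 2 * (t + 1) - 1 = 2 * t + 1 by omega, show 2 * (t + 1) - 2 = 2 * t by omega,
    show 2 * (t + 1) = 2 * t + 2 by omega, ← cubeShell_union hlam0,
    measure_union (disjoint_cubeShell_succ _) (measurableSet_cubeShell _)]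
  change nuMeas n β (cubeShell n lam (2 * t + 1)) < _
  refine ENNReal.lt_half_mul_add_of_le_mul (c := ENNReal.ofReal (2 ^ ((n : ℝ) - β))) ?_ ?_
    ((nuMeas_eq_zero_iff ?_).not.2 (volume_cubeShell_ne_zero hn (by linarith) _))
    (ne_top_of_le_ne_top (volume_cubeShell_ne_top hlam0 _) (nuMeas_le_volume _))
  · rw [← two_smul_cubeShell, nuMeas_smul_set (by linarith) one_le_two
      (measurableSet_cubeShell _) fun x => one_le_norm_of_mem_cubeShell hlam]
  · rw [ENNReal.ofReal_lt_one]
    exact Real.rpow_lt_one_of_one_lt_of_neg one_lt_two (by linarith)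
  · exact fun h0 => absurd (one_le_norm_of_mem_cubeShell hlam h0) (by norm_num)
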